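/- arXiv:1611.03021 — 7 statements merged into one kernel-verified Lean document; each statement's English description precedes it below -/
import Mathlib

section
/- Let a < b and let f : [a,b] → ℝ be Lipschitz continuous. Then TV_log^1(f) = TV(f), i.e., for Lipschitz functions the log-total-variation with ε = 1 coincides with the total variation. -/
/-- The set of partition sums `∑ φ |f (t_{i+1}) - f (t_i)|` over all partitions
`a = t_0 < t_1 < ⋯ < t_n = b` (with `n ≥ 1`) of `[a, b]`. -/
def partitionSums (a b : ℝ) (f : ℝ → ℝ) (φ : ℝ → ℝ) : Set ℝ :=
  { s | ∃ (n : ℕ) (t : ℕ → ℝ), 0 < n ∧ t 0 = a ∧ t n = b ∧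
      (∀ i < n, t i < t (i + 1)) ∧
      s = ∑ i ∈ Finset.range n, φ |f (t (i + 1)) - f (t i)| }

/-- Total variation `TV(f)` on `[a,b]`, as an extended real number. -/
noncomputable def eTV (a b : ℝ) (f : ℝ → ℝ) : EReal :=
  sSup ((fun s : ℝ => (s : EReal)) '' partitionSums a b f id)

/-- Log-total-variation `TV_log^ε(f)` on `[a,b]`, as an extended real number. -/
noncomputable def eTVlog (ε a b : ℝ) (f : ℝ → ℝ) : EReal :=
  sSup ((fun s : ℝ => (s : EReal)) '' partitionSums a b f (fun u => Real.log (ε + u)))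

/-!
For `u ≥ 0` we have `u - u ^ 2 ≤ log (1 + u) ≤ u`. The upper bound compares the two suprema
partition by partition. For the lower bound, cut every interval of a partition into `m` equal
pieces: by the triangle inequality the variation sum does not decrease, while the Lipschitz bound
makes the quadratic error at most `K ^ 2 (b - a) ^ 2 / m`, which tends to `0`.
-/

open Finset Real

lemma log_one_add_le_self {u : ℝ} (hu : 0 ≤ u) : log (1 + u) ≤ u := by
  simpa using log_le_sub_one_of_pos (by positivity : (0 : ℝ) < 1 + u)

lemma sub_sq_le_log_one_add {u : ℝ} (hu : 0 ≤ u) : u - u ^ 2 ≤ log (1 + u) := by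
  refine le_trans ?_ (le_log_one_add_of_nonneg hu)
  rw [le_div_iff₀ (by positivity)]
  nlinarith [sq_nonneg u, pow_nonneg hu 3]

lemma sum_sub_card_mul_sq_le_sum_log_one_add {ι : Type*} (s : Finset ι) {u : ι → ℝ} {δ : ℝ}
    (hu : ∀ i ∈ s, 0 ≤ u i) (huδ : ∀ i ∈ s, u i ≤ δ) :
    ∑ i ∈ s, u i - #s * δ ^ 2 ≤ ∑ i ∈ s, log (1 + u i) := by
  have hsq : ∑ i ∈ s, u i ^ 2 ≤ #s * δ ^ 2 := by
    simpa using sum_le_card_nsmul s (fun i => u i ^ 2) (δ ^ 2)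
      fun i hi => pow_le_pow_left₀ (hu i hi) (huδ i hi) 2
  calc ∑ i ∈ s, u i - #s * δ ^ 2 ≤ ∑ i ∈ s, (u i - u i ^ 2) := by
        rw [sum_sub_distrib]; linarith
    _ ≤ ∑ i ∈ s, log (1 + u i) := sum_le_sum fun i hi => sub_sq_le_log_one_add (hu i hi)

lemma mem_Icc_of_forall_lt_succ {n : ℕ} {t : ℕ → ℝ} (ht : ∀ i < n, t i < t (i + 1)) {i : ℕ}
    (hi : i ≤ n) : t i ∈ Set.Icc (t 0) (t n) := by
  have hmono := (strictMonoOn_Iic_of_lt_succ (ψ := t) (n := n)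
    fun m hm => by simpa using ht m hm).monotoneOn
  exact ⟨hmono (Nat.zero_le n) hi (Nat.zero_le i), hmono hi (le_refl n) hi⟩

section PartitionSums

variable {f φ : ℝ → ℝ}

lemma add_mem_partitionSums {a b c s₁ s₂ : ℝ} (h₁ : s₁ ∈ partitionSums a c f φ)
    (h₂ : s₂ ∈ partitionSums c b f φ) : s₁ + s₂ ∈ partitionSums a b f φ := by
  obtain ⟨n₁, t₁, hn₁, h₁0, h₁n, ht₁, rfl⟩ := h₁
  obtain ⟨n₂, t₂, hn₂, h₂0, h₂n, ht₂, rfl⟩ := h₂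
  set t : ℕ → ℝ := fun j => if j < n₁ then t₁ j else t₂ (j - n₁)
  have left : ∀ j ≤ n₁, t j = t₁ j := by
    intro j hj
    rcases hj.lt_or_eq with hj | rfl
    · simp [t, hj]
    · simp [t, h₁n, h₂0]
  have right : ∀ k, t (n₁ + k) = t₂ k := by simp [t]
  refine ⟨n₁ + n₂, t, by omega, by rw [left 0 (Nat.zero_le _), h₁0], by rw [right, h₂n],
    fun j hj => ?_, ?_⟩
  · rcases lt_or_ge j n₁ with hj₁ | hj₁
    · rw [left j hj₁.le, left (j + 1) hj₁]
      exact ht₁ j hj₁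
    · obtain ⟨k, rfl⟩ := Nat.exists_eq_add_of_le hj₁
      have := ht₂ k (by omega)
      rwa [← right, ← right] at this
  · rw [sum_range_add]
    congr 1
    · exact sum_congr rfl fun j hj => by
        rw [left j (mem_range.1 hj).le, left (j + 1) (mem_range.1 hj)]
    · exact sum_congr rfl fun k _ => by rw [← right, ← right]; rfl

lemma sum_mem_partitionSums {n : ℕ} (hn : 0 < n) {t s : ℕ → ℝ}
    (hs : ∀ i < n, s i ∈ partitionSums (t i) (t (i + 1)) f φ) :
    ∑ i ∈ range n, s i ∈ partitionSums (t 0) (t n) f φ := by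
  induction n, hn using Nat.le_induction with
  | base => simpa using hs 0 zero_lt_one
  | succ n hn ih =>
    rw [sum_range_succ]
    exact add_mem_partitionSums (ih fun i hi => hs i (by omega)) (hs n n.lt_succ_self)

lemma exists_mem_partitionSums_ge_of_le {ψ : ℝ → ℝ} (hφψ : ∀ u, 0 ≤ u → φ u ≤ ψ u)
    {a b s : ℝ} (hs : s ∈ partitionSums a b f φ) : ∃ s' ∈ partitionSums a b f ψ, s ≤ s' := by
  obtain ⟨n, t, hn, h0, hnb, ht, rfl⟩ := hs
  exact ⟨_, ⟨n, t, hn, h0, hnb, ht, rfl⟩, sum_le_sum fun i _ => hφψ _ (abs_nonneg _)⟩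

variable {K : NNReal}

lemma exists_log_partitionSum_ge_abs_sub {c d : ℝ} (hcd : c < d)
    (hf : LipschitzOnWith K f (Set.Icc c d)) {m : ℕ} (hm : 0 < m) :
    ∃ s ∈ partitionSums c d f (fun u => log (1 + u)),
      |f d - f c| - K ^ 2 * (d - c) ^ 2 / m ≤ s := by
  set h := (d - c) / m
  have hh : 0 < h := div_pos (sub_pos.2 hcd) (by exact_mod_cast hm)
  set t : ℕ → ℝ := fun j => c + j * h
  have ht : ∀ j, t (j + 1) = t j + h := fun j => by simp only [t]; push_cast; ring
  have ht0 : t 0 = c := by simp [t]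
  have htm : t m = d := by simp only [t, h]; field_simp; ring
  have hmem : ∀ j ≤ m, t j ∈ Set.Icc c d := fun j hj => by
    simpa [ht0, htm] using mem_Icc_of_forall_lt_succ (t := t) (fun i _ => by rw [ht]; linarith) hj
  set u : ℕ → ℝ := fun j => |f (t (j + 1)) - f (t j)|
  have hu : ∀ j ∈ range m, u j ≤ K * h := fun j hj => by
    have hj := mem_range.1 hj
    simpa [u, Real.dist_eq, ht, abs_of_pos hh]
      using hf.dist_le_mul _ (hmem (j + 1) hj) _ (hmem j hj.le)
  have hvar : |f d - f c| ≤ ∑ j ∈ range m, u j := by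
    simpa [u, Real.dist_eq, abs_sub_comm, ht0, htm] using dist_le_range_sum_dist (f ∘ t) m
  refine ⟨∑ j ∈ range m, log (1 + u j),
    ⟨m, t, hm, ht0, htm, fun j _ => by rw [ht]; linarith, rfl⟩, ?_⟩
  calc |f d - f c| - K ^ 2 * (d - c) ^ 2 / m ≤ ∑ j ∈ range m, u j - #(range m) * (K * h) ^ 2 := by
        rw [card_range]
        have : (m : ℝ) * (K * h) ^ 2 = K ^ 2 * (d - c) ^ 2 / m := by
          simp only [h]; field_simp
        linarith
    _ ≤ _ := sum_sub_card_mul_sq_le_sum_log_one_add _ (fun j _ => abs_nonneg _) hu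

lemma exists_log_partitionSum_ge_sub_div {a b S : ℝ} (hf : LipschitzOnWith K f (Set.Icc a b))
    (hS : S ∈ partitionSums a b f id) {m : ℕ} (hm : 0 < m) :
    ∃ s ∈ partitionSums a b f (fun u => log (1 + u)), S - K ^ 2 * (b - a) ^ 2 / m ≤ s := by
  obtain ⟨n, t, hn, rfl, rfl, ht, rfl⟩ := hS
  have piece : ∀ i < n, ∃ s ∈ partitionSums (t i) (t (i + 1)) f (fun u => log (1 + u)),
      |f (t (i + 1)) - f (t i)| - K ^ 2 * (t (i + 1) - t i) ^ 2 / m ≤ s := fun i hi =>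
    exists_log_partitionSum_ge_abs_sub (ht i hi)
      (hf.mono (Set.Icc_subset_Icc (mem_Icc_of_forall_lt_succ ht hi.le).1
        (mem_Icc_of_forall_lt_succ ht hi).2)) hm
  choose! s hs hs_ge using piece
  refine ⟨∑ i ∈ range n, s i, sum_mem_partitionSums hn hs, ?_⟩
  have hsq : ∑ i ∈ range n, (t (i + 1) - t i) ^ 2 ≤ (t n - t 0) ^ 2 := by
    rw [← sum_range_sub t n]
    exact sum_sq_le_sq_sum_of_nonneg fun i hi => (sub_pos.2 (ht i (mem_range.1 hi))).le
  calc ∑ i ∈ range n, id |f (t (i + 1)) - f (t i)| - K ^ 2 * (t n - t 0) ^ 2 / m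
      ≤ ∑ i ∈ range n, (|f (t (i + 1)) - f (t i)| - K ^ 2 * (t (i + 1) - t i) ^ 2 / m) := by
        rw [sum_sub_distrib, ← sum_div, ← mul_sum]
        simp only [id]
        gcongr
    _ ≤ ∑ i ∈ range n, s i := sum_le_sum fun i hi => hs_ge i (mem_range.1 hi)

lemma exists_log_partitionSum_ge_sub {a b S η : ℝ} (hf : LipschitzOnWith K f (Set.Icc a b))
    (hS : S ∈ partitionSums a b f id) (hη : 0 < η) :
    ∃ s ∈ partitionSums a b f (fun u => log (1 + u)), S - η ≤ s := by
  obtain ⟨m, hm⟩ := exists_nat_gt (K ^ 2 * (b - a) ^ 2 / η)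
  have hm₀ : (0 : ℝ) < m := lt_of_le_of_lt (by positivity) hm
  obtain ⟨s, hs, hle⟩ := exists_log_partitionSum_ge_sub_div hf hS (m := m) (by exact_mod_cast hm₀)
  have herr : K ^ 2 * (b - a) ^ 2 / m ≤ η := by
    rw [div_lt_iff₀ hη] at hm
    rw [div_le_iff₀ hm₀]
    linarith
  exact ⟨s, hs, by linarith⟩

end PartitionSums

theorem tvlog_eq_tv_of_lipschitz_general (a b : ℝ) (f : ℝ → ℝ)
    (K : NNReal) (hf : LipschitzOnWith K f (Set.Icc a b)) :
    eTVlog 1 a b f = eTV a b f := by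
  apply le_antisymm
  · refine sSup_le_sSup_of_isCofinalFor ?_
    rintro _ ⟨s, hs, rfl⟩
    obtain ⟨s', hs', hle⟩ :=
      exists_mem_partitionSums_ge_of_le (fun _ => log_one_add_le_self) hs
    exact ⟨s', Set.mem_image_of_mem _ hs', EReal.coe_le_coe_iff.2 hle⟩
  · refine sSup_le ?_
    rintro _ ⟨S, hS, rfl⟩
    refine EReal.ge_of_forall_gt_iff_ge.1 fun z hz => ?_
    obtain ⟨s, hs, hle⟩ :=
      exists_log_partitionSum_ge_sub hf hS (sub_pos.2 (EReal.coe_lt_coe_iff.1 hz))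
    exact le_sSup_of_le (Set.mem_image_of_mem _ hs) (EReal.coe_le_coe_iff.2 (by linarith))

/-- if `f : [a,b] → ℝ` is Lipschitz continuous, then the
log-total-variation with `ε = 1` coincides with the total variation. -/
theorem tvlog_eq_tv_of_lipschitz (a b : ℝ) (hab : a < b) (f : ℝ → ℝ)
    (K : NNReal) (hf : LipschitzOnWith K f (Set.Icc a b)) :
    eTVlog 1 a b f = eTV a b f :=
  tvlog_eq_tv_of_lipschitz_general a b f K hf
end

section
/- Let a < b, let L ≥ 0, and let f : [a,b] → ℝ be L-Lipschitz. Let a = t_0 < t_1 < ⋯ < t_n = b be a partition with mesh max_i (t_{i+1} − t_i) ≤ δ, and write Δ_i = |f(t_{i+1}) − f(t_i)|. Then Σ_{i=0}^{n−1} Δ_i − Σ_{i=0}^{n−1} log(1 + Δ_i) ≤ (L²δ/2)·(b − a). In particular, the value of the log(1+·) partition sum over an δ-mesh partition is at most L²δ(b−a) smaller (up to the constant 1/2) than the corresponding total-variation partition sum. -/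
/-!
On each subinterval the Lipschitz bound gives `Δᵢ ≤ L hᵢ` with `hᵢ = tᵢ₊₁ - tᵢ ≤ δ`, and the
elementary inequality `x - log (1 + x) ≤ x² / 2` for `x ≥ 0` turns this into
`Δᵢ - log (1 + Δᵢ) ≤ (L² δ / 2) hᵢ`. Summing, the lengths `hᵢ` telescope to `b - a`.
-/

open Finset

lemma Real.sub_log_one_add_le_sq_div_two {x : ℝ} (hx : 0 ≤ x) :
    x - Real.log (1 + x) ≤ x ^ 2 / 2 := by
  have hlog := Real.le_log_one_add_of_nonneg hx
  have hpad : 2 * x / (x + 2) = x - x ^ 2 / (x + 2) := by field_simp; ring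
  have hsq : x ^ 2 / (x + 2) ≤ x ^ 2 / 2 :=
    div_le_div_of_nonneg_left (sq_nonneg x) two_pos (by linarith)
  linarith

lemma sub_log_one_add_le_of_le_mul {Δ L h δ : ℝ} (hΔ : 0 ≤ Δ) (hΔL : Δ ≤ L * h) (hhδ : h ≤ δ)
    (hh : 0 ≤ h) : Δ - Real.log (1 + Δ) ≤ L ^ 2 * δ / 2 * h := by
  have hsq : Δ ^ 2 ≤ L ^ 2 * h * h := by
    calc Δ ^ 2 ≤ (L * h) ^ 2 := pow_le_pow_left₀ hΔ hΔL 2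
      _ = L ^ 2 * h * h := by ring
  have hmesh : L ^ 2 * h * h ≤ L ^ 2 * δ * h := by gcongr
  linarith [Real.sub_log_one_add_le_sq_div_two hΔ]

lemma mem_Icc_of_le_add_one {t : ℕ → ℝ} {n : ℕ} (ht : ∀ i < n, t i ≤ t (i + 1)) {i : ℕ}
    (hi : i ≤ n) : t i ∈ Set.Icc (t 0) (t n) := by
  have hmono : MonotoneOn t (Set.Iic n) :=
    monotoneOn_of_le_add_one Set.ordConnected_Iic fun j _ _ hj => ht j (Nat.lt_of_succ_le hj)
  exact ⟨hmono (Nat.zero_le n) hi (Nat.zero_le i), hmono hi (le_refl n) hi⟩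

theorem tv_sub_logsum_le_of_lipschitz_general (a b L δ : ℝ) (f : ℝ → ℝ)
    (hf : ∀ x ∈ Set.Icc a b, ∀ y ∈ Set.Icc a b, |f x - f y| ≤ L * |x - y|)
    (n : ℕ) (t : ℕ → ℝ) (ht0 : t 0 = a) (htn : t n = b)
    (hmono : ∀ i < n, t i < t (i + 1))
    (hmesh : ∀ i < n, t (i + 1) - t i ≤ δ) :
    (∑ i ∈ Finset.range n, |f (t (i + 1)) - f (t i)|) -
        (∑ i ∈ Finset.range n, Real.log (1 + |f (t (i + 1)) - f (t i)|)) ≤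
      (L ^ 2 * δ / 2) * (b - a) := by
  have hmem : ∀ i ≤ n, t i ∈ Set.Icc a b := fun i hi => by
    simpa only [ht0, htn] using mem_Icc_of_le_add_one (fun j hj => (hmono j hj).le) hi
  have hstep : ∀ i ∈ range n, |f (t (i + 1)) - f (t i)| -
      Real.log (1 + |f (t (i + 1)) - f (t i)|) ≤ L ^ 2 * δ / 2 * (t (i + 1) - t i) := by
    intro i hi
    have hi : i < n := mem_range.mp hi
    have hpos : 0 < t (i + 1) - t i := sub_pos.mpr (hmono i hi)
    have hlip := hf _ (hmem (i + 1) hi) _ (hmem i hi.le)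
    rw [abs_of_pos hpos] at hlip
    exact sub_log_one_add_le_of_le_mul (abs_nonneg _) hlip (hmesh i hi) hpos.le
  calc _ = ∑ i ∈ range n, (|f (t (i + 1)) - f (t i)| -
          Real.log (1 + |f (t (i + 1)) - f (t i)|)) := (sum_sub_distrib ..).symm
    _ ≤ ∑ i ∈ range n, L ^ 2 * δ / 2 * (t (i + 1) - t i) := sum_le_sum hstep
    _ = L ^ 2 * δ / 2 * (b - a) := by rw [← mul_sum, sum_range_sub, ht0, htn]

/-- if `f : [a,b] → ℝ` is `L`-Lipschitz and
`a = t_0 < t_1 < ⋯ < t_n = b` is a partition of mesh at most `δ`, then with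
`Δ_i = |f (t_{i+1}) - f (t_i)|` we have
`∑ Δ_i - ∑ log(1 + Δ_i) ≤ (L²δ/2)·(b - a)`. -/
theorem tv_sub_logsum_le_of_lipschitz (a b L δ : ℝ) (hab : a < b) (hL : 0 ≤ L)
    (hδ : 0 ≤ δ) (f : ℝ → ℝ)
    (hf : ∀ x ∈ Set.Icc a b, ∀ y ∈ Set.Icc a b, |f x - f y| ≤ L * |x - y|)
    (n : ℕ) (t : ℕ → ℝ) (hn : 0 < n) (ht0 : t 0 = a) (htn : t n = b)
    (hmono : ∀ i < n, t i < t (i + 1))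
    (hmesh : ∀ i < n, t (i + 1) - t i ≤ δ) :
    (∑ i ∈ Finset.range n, |f (t (i + 1)) - f (t i)|) -
        (∑ i ∈ Finset.range n, Real.log (1 + |f (t (i + 1)) - f (t i)|)) ≤
      (L ^ 2 * δ / 2) * (b - a) :=
  tv_sub_logsum_le_of_lipschitz_general a b L δ f hf n t ht0 htn hmono hmesh
end

section
/- Let n ≥ 2, γ > 0, and x ∈ ℝⁿ. Let u* be the unique minimizer over w ∈ ℝⁿ of F(w) = (1/2)‖w − x‖² + γ·Σ_{i=1}^{n−1} |w_{i+1} − w_i|, and let z* be the unique minimizer of F over the nonnegative orthant {w ∈ ℝⁿ : w_i ≥ 0 for all i}. Then z* = (u*)⁺, the coordinatewise positive part of u*. In other words, the proximal map of γ‖D·‖₁ + δ(· ≥ 0) decomposes as the projection onto the nonnegative orthant composed with the (unconstrained) fused-lasso proximal map (standard model case of Proposition 3.5). -/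
/-- Key scalar inequality for the total-variation terms: the positive part is
monotone and 1-Lipschitz, so `|a+δ| - |a| ≥ |p+δ| - |p|` fails... rather,
`|a+δ| + |p| ≤ |p+δ| + |a|` where `a = s - t`, `p = s⁺ - t⁺`. -/
lemma tv_key (s t δ : ℝ) :
    |s - t + δ| + |max s 0 - max t 0| ≤ |max s 0 - max t 0 + δ| + |s - t| := by
  have h2 : |s - t - (max s 0 - max t 0)| + |max s 0 - max t 0| = |s - t| := by
    rcases le_total s 0 with hs | hs <;> rcases le_total t 0 with ht | ht
    · rw [max_eq_right hs, max_eq_right ht]; simp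
    · rw [max_eq_right hs, max_eq_left ht]
      rw [abs_of_nonpos (by linarith), abs_of_nonpos (by linarith), abs_of_nonpos (by linarith)]
      ring
    · rw [max_eq_left hs, max_eq_right ht]
      rw [abs_of_nonneg (by linarith), abs_of_nonneg (by linarith), abs_of_nonneg (by linarith)]
      ring
    · rw [max_eq_left hs, max_eq_left ht]; simp
  have h := abs_add_le (max s 0 - max t 0 + δ) (s - t - (max s 0 - max t 0))
  have h3 : max s 0 - max t 0 + δ + (s - t - (max s 0 - max t 0)) = s - t + δ := by ring
  rw [h3] at h
  linarith

/-- Key scalar inequality for the quadratic terms. -/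
lemma quad_key (a b c : ℝ) (hb : 0 ≤ b) :
    (a + b - max a 0 - c) ^ 2 + (max a 0 - c) ^ 2 ≤ (b - c) ^ 2 + (a - c) ^ 2 := by
  rcases le_total a 0 with h | h
  · rw [max_eq_right h]; nlinarith [mul_nonneg (neg_nonneg.2 h) hb]
  · rw [max_eq_left h]; nlinarith

/-- The fused-lasso objective
`F(w) = (1/2)‖w − x‖² + γ·∑_{i=1}^{n−1} |w_{i+1} − w_i|` on `ℝⁿ` with
`n = m + 2 ≥ 2`. -/
noncomputable def fusedLassoObj (m : ℕ) (γ : ℝ) (x w : Fin (m + 2) → ℝ) : ℝ :=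
  (1 / 2) * ∑ i, (w i - x i) ^ 2 +
    γ * ∑ i : Fin (m + 1), |w i.succ - w i.castSucc|

/-- standard model case of Proposition 3.5: if `u` minimizes the
fused-lasso objective over all of `ℝⁿ` and `z` minimizes it over the
nonnegative orthant, then `z` is the coordinatewise positive part of `u`:
the proximal map of `γ‖D·‖₁ + δ(· ≥ 0)` decomposes as the projection onto the
nonnegative orthant composed with the unconstrained fused-lasso proximal map. -/
theorem prox_decomposition_standard (m : ℕ) (γ : ℝ) (hγ : 0 < γ)
    (x u z : Fin (m + 2) → ℝ)
    (hu : ∀ w : Fin (m + 2) → ℝ, fusedLassoObj m γ x u ≤ fusedLassoObj m γ x w)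
    (hz_nonneg : ∀ i, 0 ≤ z i)
    (hz : ∀ w : Fin (m + 2) → ℝ, (∀ i, 0 ≤ w i) →
      fusedLassoObj m γ x z ≤ fusedLassoObj m γ x w) :
    z = fun i => max (u i) 0 := by
  classical
  set P : Fin (m + 2) → ℝ := fun i => max (u i) 0 with hPdef
  set v : Fin (m + 2) → ℝ := fun i => u i + z i - P i with hvdef
  have hPnn : ∀ i, 0 ≤ P i := fun i => le_max_right _ _
  have h1 : fusedLassoObj m γ x z ≤ fusedLassoObj m γ x P := hz P hPnn
  have h2 : fusedLassoObj m γ x u ≤ fusedLassoObj m γ x v := hu v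
  -- quadratic part of the key inequality
  have hQ : (∑ i, (v i - x i) ^ 2) + (∑ i, (P i - x i) ^ 2) ≤
      (∑ i, (z i - x i) ^ 2) + (∑ i, (u i - x i) ^ 2) := by
    rw [← Finset.sum_add_distrib, ← Finset.sum_add_distrib]
    refine Finset.sum_le_sum fun i _ => ?_
    simpa [hvdef, hPdef] using quad_key (u i) (z i) (x i) (hz_nonneg i)
  -- TV part of the key inequality
  have hT : (∑ i : Fin (m + 1), |v i.succ - v i.castSucc|) +
        (∑ i : Fin (m + 1), |P i.succ - P i.castSucc|) ≤
      (∑ i : Fin (m + 1), |z i.succ - z i.castSucc|) +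
        (∑ i : Fin (m + 1), |u i.succ - u i.castSucc|) := by
    rw [← Finset.sum_add_distrib, ← Finset.sum_add_distrib]
    refine Finset.sum_le_sum fun i _ => ?_
    have h := tv_key (u i.succ) (u i.castSucc)
      ((z i.succ - z i.castSucc) - (max (u i.succ) 0 - max (u i.castSucc) 0))
    simp only [hvdef, hPdef]
    have e1 : u i.succ + z i.succ - max (u i.succ) 0 -
        (u i.castSucc + z i.castSucc - max (u i.castSucc) 0) =
        u i.succ - u i.castSucc +
          ((z i.succ - z i.castSucc) - (max (u i.succ) 0 - max (u i.castSucc) 0)) := by ring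
    have e2 : |z i.succ - z i.castSucc| = |max (u i.succ) 0 - max (u i.castSucc) 0 +
        ((z i.succ - z i.castSucc) - (max (u i.succ) 0 - max (u i.castSucc) 0))| :=
      congrArg abs (by ring)
    rw [e1, e2]
    exact h
  -- combine: F v + F P ≤ F z + F u
  have h3 : fusedLassoObj m γ x v + fusedLassoObj m γ x P ≤
      fusedLassoObj m γ x z + fusedLassoObj m γ x u := by
    simp only [fusedLassoObj]
    have hT2 := mul_le_mul_of_nonneg_left hT hγ.le
    rw [mul_add, mul_add] at hT2
    linarith
  have heq : fusedLassoObj m γ x z = fusedLassoObj m γ x P := le_antisymm h1 (by linarith)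
  -- strict convexity via the midpoint
  set w2 : Fin (m + 2) → ℝ := fun i => (z i + P i) / 2 with hw2def
  have h4 : fusedLassoObj m γ x z ≤ fusedLassoObj m γ x w2 :=
    hz w2 fun i => by
      have := hz_nonneg i; have := hPnn i
      simp only [hw2def]; linarith
  have hq2 : (∑ i, (w2 i - x i) ^ 2) =
      (1 / 2) * (∑ i, (z i - x i) ^ 2) + (1 / 2) * (∑ i, (P i - x i) ^ 2) -
        (1 / 4) * ∑ i, (z i - P i) ^ 2 := by
    rw [Finset.mul_sum, Finset.mul_sum, Finset.mul_sum, ← Finset.sum_add_distrib,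
      ← Finset.sum_sub_distrib]
    exact Finset.sum_congr rfl fun i _ => by simp only [hw2def]; ring
  have ht2 : (∑ i : Fin (m + 1), |w2 i.succ - w2 i.castSucc|) ≤
      (1 / 2) * (∑ i : Fin (m + 1), |z i.succ - z i.castSucc|) +
        (1 / 2) * (∑ i : Fin (m + 1), |P i.succ - P i.castSucc|) := by
    rw [Finset.mul_sum, Finset.mul_sum, ← Finset.sum_add_distrib]
    refine Finset.sum_le_sum fun i _ => ?_
    simp only [hw2def]
    have e : (z i.succ + P i.succ) / 2 - (z i.castSucc + P i.castSucc) / 2 =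
        (1 / 2) * (z i.succ - z i.castSucc) + (1 / 2) * (P i.succ - P i.castSucc) := by ring
    rw [e]
    refine (abs_add_le _ _).trans (le_of_eq ?_)
    rw [abs_mul, abs_mul, abs_of_nonneg (by norm_num : (0:ℝ) ≤ 1 / 2)]
  have h5 : fusedLassoObj m γ x w2 ≤
      fusedLassoObj m γ x z - (1 / 8) * ∑ i, (z i - P i) ^ 2 := by
    simp only [fusedLassoObj] at heq ⊢
    rw [hq2]
    have hT2 := mul_le_mul_of_nonneg_left ht2 hγ.le
    rw [mul_add, ← mul_assoc, ← mul_assoc, mul_comm γ (1 / 2 : ℝ), mul_assoc, mul_assoc] at hT2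
    linarith
  have h6 : (0 : ℝ) ≤ ∑ i, (z i - P i) ^ 2 := Finset.sum_nonneg fun i _ => sq_nonneg _
  have hS : ∑ i, (z i - P i) ^ 2 = 0 := by linarith
  funext i
  have hi := (Finset.sum_eq_zero_iff_of_nonneg fun j _ => sq_nonneg (z j - P j)).1 hS i
    (Finset.mem_univ i)
  have : z i - P i = 0 := by
    have := sq_eq_zero_iff.1 hi
    exact this
  have : z i = P i := by linarith
  simpa [hPdef] using this
end

section
/- Let n ≥ 2, γ > 0, and x ∈ ℝⁿ. Let u* be the unique minimizer of F(w) = (1/2)‖w − x‖² + γ·Σ_{i=1}^{n−1} |w_{i+1} − w_i| over the monotone cone {w ∈ ℝⁿ : w_{i+1} ≥ w_i for all i}, and let z* be the unique minimizer of F over {w ∈ ℝⁿ : w_i ≥ 0 and w_{i+1} ≥ w_i for all i}. Then z* = (u*)⁺, the coordinatewise positive part of u*. In other words, the proximal map of γ‖D·‖₁ + δ(· ≥ 0) + δ(D· ≥ 0) decomposes as the projection onto the nonnegative orthant composed with the monotone fused-lasso proximal map (monotone model case of Proposition 3.5). -/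
set_option maxHeartbeats 1000000

lemma tv_telescope (m : ℕ) (w : Fin (m+2) → ℝ)
    (h : ∀ i : Fin (m+1), w i.castSucc ≤ w i.succ) :
    ∑ i : Fin (m+1), |w i.succ - w i.castSucc| = w (Fin.last (m+1)) - w 0 := by
  have h1 : ∀ i : Fin (m+1), |w i.succ - w i.castSucc| = w i.succ - w i.castSucc := by
    intro i; exact abs_of_nonneg (by linarith [h i])
  rw [Finset.sum_congr rfl (fun i _ => h1 i)]
  let f : ℕ → ℝ := fun j => w ⟨min j (m+1), by omega⟩
  have h2 : ∀ i : Fin (m+1), w i.succ - w i.castSucc = f (i.1+1) - f i.1 := by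
    intro i
    have hi := i.2
    have e1 : (⟨min (i.1+1) (m+1), by omega⟩ : Fin (m+2)) = i.succ := by
      ext
      simp only [Fin.val_succ, Fin.coe_castSucc]
      omega
    have e2 : (⟨min i.1 (m+1), by omega⟩ : Fin (m+2)) = i.castSucc := by
      ext
      simp only [Fin.val_succ, Fin.coe_castSucc]
      omega
    simp only [f, e1, e2]
  rw [Finset.sum_congr rfl (fun i _ => h2 i), Fin.sum_univ_eq_sum_range (fun j => f (j+1) - f j)]
  rw [Finset.sum_range_sub f (m+1)]
  have e3 : f (m+1) = w (Fin.last (m+1)) := by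
    simp only [f]; congr 1; ext; simp [Fin.last]
  have e4 : f 0 = w 0 := by
    simp only [f]; congr 1
  rw [e3, e4]

/-- The objective on a monotone vector: the TV term telescopes. -/
lemma fusedLasso_mono (m : ℕ) (γ : ℝ) (x w : Fin (m+2) → ℝ)
    (h : ∀ i : Fin (m+1), w i.castSucc ≤ w i.succ) :
    fusedLassoObj m γ x w
      = (1/2) * ∑ i, (w i - x i)^2 + γ * (w (Fin.last (m+1)) - w 0) := by
  rw [fusedLassoObj, tv_telescope m w h]


/-- monotone model case of Proposition 3.5: if `u` minimizes the
fused-lasso objective over the monotone cone `{w : w_{i+1} ≥ w_i}` and `z`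
minimizes it over the monotone, coordinatewise-nonnegative vectors, then `z`
is the coordinatewise positive part of `u`: the proximal map of
`γ‖D·‖₁ + δ(· ≥ 0) + δ(D· ≥ 0)` decomposes as the projection onto the
nonnegative orthant composed with the monotone fused-lasso proximal map. -/
theorem prox_decomposition_monotone (m : ℕ) (γ : ℝ) (hγ : 0 < γ)
    (x u z : Fin (m + 2) → ℝ)
    (hu_mono : ∀ i : Fin (m + 1), u i.castSucc ≤ u i.succ)
    (hu : ∀ w : Fin (m + 2) → ℝ, (∀ i : Fin (m + 1), w i.castSucc ≤ w i.succ) →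
      fusedLassoObj m γ x u ≤ fusedLassoObj m γ x w)
    (hz_nonneg : ∀ i, 0 ≤ z i)
    (hz_mono : ∀ i : Fin (m + 1), z i.castSucc ≤ z i.succ)
    (hz : ∀ w : Fin (m + 2) → ℝ,
      (∀ i, 0 ≤ w i) → (∀ i : Fin (m + 1), w i.castSucc ≤ w i.succ) →
      fusedLassoObj m γ x z ≤ fusedLassoObj m γ x w) :
    z = fun i => max (u i) 0 := by
  set F : (Fin (m+2) → ℝ) → ℝ := fusedLassoObj m γ x with hFdef
  set L : Fin (m+2) := Fin.last (m+1) with hL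
  -- P = positive part of u
  set P : Fin (m+2) → ℝ := fun i => max (u i) 0 with hP
  have hPnonneg : ∀ i, 0 ≤ P i := fun i => le_max_right _ _
  have huP : ∀ i, u i ≤ P i := fun i => le_max_left _ _
  have hPmono : ∀ i : Fin (m+1), P i.castSucc ≤ P i.succ := by
    intro i; exact max_le_max (hu_mono i) le_rfl
  -- differences of P are dominated by differences of u
  have hdP : ∀ i : Fin (m+1), P i.succ - P i.castSucc ≤ u i.succ - u i.castSucc := by
    intro i
    have h1 := hu_mono i
    simp only [hP]
    rcases le_total (u i.castSucc) 0 with h2 | h2 <;>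
      rcases le_total (u i.succ) 0 with h3 | h3 <;>
      simp [max_eq_left, max_eq_right, h2, h3] <;> linarith
  -- expansion of F on monotone vectors
  have hF : ∀ w, (∀ i : Fin (m+1), w i.castSucc ≤ w i.succ) →
      F w = (1/2) * ∑ i, (w i - x i)^2 + γ * (w L - w 0) :=
    fun w hw => fusedLasso_mono m γ x w hw
  -- uniqueness via strong convexity: any feasible c with F c ≤ F z equals z
  have huniq : ∀ c : Fin (m+2) → ℝ, (∀ i, 0 ≤ c i) →
      (∀ i : Fin (m+1), c i.castSucc ≤ c i.succ) → F c ≤ F z → z = c := by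
    intro c hc1 hc2 hc3
    set mid : Fin (m+2) → ℝ := fun i => (z i + c i)/2 with hmid
    have hmid1 : ∀ i, 0 ≤ mid i := fun i => by
      have := hz_nonneg i; have := hc1 i; simp only [hmid]; linarith
    have hmid2 : ∀ i : Fin (m+1), mid i.castSucc ≤ mid i.succ := fun i => by
      have := hz_mono i; have := hc2 i; simp only [hmid]; linarith
    have h1 : F z ≤ F mid := hz mid hmid1 hmid2
    have hq : ∑ i, (mid i - x i)^2
        = (1/2) * ∑ i, (z i - x i)^2 + (1/2) * ∑ i, (c i - x i)^2
          - (1/4) * ∑ i, (z i - c i)^2 := by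
      rw [Finset.mul_sum, Finset.mul_sum, Finset.mul_sum, ← Finset.sum_add_distrib,
        ← Finset.sum_sub_distrib]
      exact Finset.sum_congr rfl fun i _ => by simp only [hmid]; ring
    have hS : ∑ i, (z i - c i)^2 ≤ 0 := by
      have e1 := hF z hz_mono
      have e2 := hF c hc2
      have e3 := hF mid hmid2
      rw [e1] at h1 hc3
      rw [e2] at hc3
      rw [e3, hq] at h1
      have hml : mid L = (z L + c L)/2 := rfl
      have hm0 : mid 0 = (z 0 + c 0)/2 := rfl
      rw [hml, hm0] at h1
      nlinarith [h1, hc3, hγ]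
    have hS0 : ∑ i, (z i - c i)^2 = 0 :=
      le_antisymm hS (Finset.sum_nonneg fun i _ => sq_nonneg _)
    funext i
    have := (Finset.sum_eq_zero_iff_of_nonneg (fun i _ => sq_nonneg (z i - c i))).mp hS0
      i (Finset.mem_univ i)
    have : z i - c i = 0 := by nlinarith [this]
    linarith
  -- Step A: z ≤ P
  set w1 : Fin (m+2) → ℝ := fun i => max (z i) (P i) with hw1
  set w2 : Fin (m+2) → ℝ := fun i => min (z i) (P i) with hw2
  have hw1mono : ∀ i : Fin (m+1), w1 i.castSucc ≤ w1 i.succ :=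
    fun i => max_le_max (hz_mono i) (hPmono i)
  have hw2mono : ∀ i : Fin (m+1), w2 i.castSucc ≤ w2 i.succ :=
    fun i => min_le_min (hz_mono i) (hPmono i)
  have hw2nonneg : ∀ i, 0 ≤ w2 i := fun i => le_min (hz_nonneg i) (hPnonneg i)
  have hPw1 : ∀ i, P i ≤ w1 i := fun i => le_max_right _ _
  -- v = u + w1 - P is monotone
  set v : Fin (m+2) → ℝ := fun i => u i + w1 i - P i with hv
  have hvmono : ∀ i : Fin (m+1), v i.castSucc ≤ v i.succ := by
    intro i
    have := hdP i; have := hw1mono i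
    simp only [hv]; linarith
  have hBq : ∑ i, ((P i - x i)^2 + (v i - x i)^2)
      ≤ ∑ i, ((u i - x i)^2 + (w1 i - x i)^2) := by
    refine Finset.sum_le_sum fun i _ => ?_
    have h1 := huP i; have h2 := hPw1 i
    simp only [hv]
    nlinarith [mul_nonneg (sub_nonneg.mpr h2) (sub_nonneg.mpr h1)]
  have hB : F P ≤ F w1 := by
    have h1 : F u ≤ F v := hu v hvmono
    have e1 := hF u hu_mono
    have e2 := hF v hvmono
    have e3 := hF P hPmono
    have e4 := hF w1 hw1mono
    rw [e1, e2] at h1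
    rw [e3, e4]
    have hsum : ∑ i, ((P i - x i)^2 + (v i - x i)^2)
        = ∑ i, (P i - x i)^2 + ∑ i, (v i - x i)^2 := Finset.sum_add_distrib
    have hsum2 : ∑ i, ((u i - x i)^2 + (w1 i - x i)^2)
        = ∑ i, (u i - x i)^2 + ∑ i, (w1 i - x i)^2 := Finset.sum_add_distrib
    have hvL : v L = u L + w1 L - P L := rfl
    have hv0 : v 0 = u 0 + w1 0 - P 0 := rfl
    rw [hvL, hv0] at h1
    have hBq' : ∑ i, (P i - x i)^2 + ∑ i, (v i - x i)^2
        ≤ ∑ i, (u i - x i)^2 + ∑ i, (w1 i - x i)^2 := by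
      rw [← hsum, ← hsum2]; exact hBq
    nlinarith [hBq', h1, hγ]
  have hCq : ∑ i, ((w1 i - x i)^2 + (w2 i - x i)^2)
      = ∑ i, ((z i - x i)^2 + (P i - x i)^2) := by
    refine Finset.sum_congr rfl fun i _ => ?_
    simp only [hw1, hw2]
    rcases le_total (z i) (P i) with h | h
    · rw [max_eq_right h, min_eq_left h]
      ring
    · rw [max_eq_left h, min_eq_right h]
  have hC : F w1 + F w2 = F z + F P := by
    have e1 := hF z hz_mono
    have e2 := hF P hPmono
    have e3 := hF w1 hw1mono
    have e4 := hF w2 hw2mono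
    rw [e1, e2, e3, e4]
    have hsum : ∑ i, ((w1 i - x i)^2 + (w2 i - x i)^2)
        = ∑ i, (w1 i - x i)^2 + ∑ i, (w2 i - x i)^2 := Finset.sum_add_distrib
    have hsum2 : ∑ i, ((z i - x i)^2 + (P i - x i)^2)
        = ∑ i, (z i - x i)^2 + ∑ i, (P i - x i)^2 := Finset.sum_add_distrib
    have hmm : ∀ j : Fin (m+2), w1 j + w2 j = z j + P j := by
      intro j; simp only [hw1, hw2]; rw [max_add_min]
    have h0 := hmm 0; have hLL := hmm L
    have hCq' : ∑ i, (w1 i - x i)^2 + ∑ i, (w2 i - x i)^2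
        = ∑ i, (z i - x i)^2 + ∑ i, (P i - x i)^2 := by
      rw [← hsum, ← hsum2]; exact hCq
    nlinarith [hCq', h0, hLL, hγ]
  have hD : F z ≤ F w2 := hz w2 hw2nonneg hw2mono
  have hzw2 : z = w2 := huniq w2 hw2nonneg hw2mono (by linarith only [hB, hC, hD])
  have hzP : ∀ i, z i ≤ P i := by
    intro i
    have : z i = min (z i) (P i) := congrFun hzw2 i
    rw [this]; exact min_le_right _ _
  -- Step B: F P ≤ F z hence z = P
  set s : Fin (m+2) → ℝ := fun i => P i - z i with hs
  have hsnn : ∀ i, 0 ≤ s i := fun i => by simp only [hs]; linarith [hzP i]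
  have hsPu : ∀ i, s i * (P i - u i) = 0 := by
    intro i
    rcases le_total (u i) 0 with h | h
    · have hP0 : P i = 0 := by simp only [hP]; exact max_eq_right h
      have : z i = 0 := le_antisymm (by rw [← hP0]; exact hzP i) (hz_nonneg i)
      simp only [hs, hP0, this]; ring
    · have : P i = u i := by simp only [hP]; exact max_eq_left h
      rw [this]; ring
  set v2 : Fin (m+2) → ℝ := fun i => u i - s i with hv2
  have hv2mono : ∀ i : Fin (m+1), v2 i.castSucc ≤ v2 i.succ := by
    intro i
    have := hdP i; have := hz_mono i
    simp only [hv2, hs]; linarith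
  have hEq : ∑ i, ((P i - x i)^2 + (v2 i - x i)^2)
      = ∑ i, ((z i - x i)^2 + (u i - x i)^2) := by
    refine Finset.sum_congr rfl fun i _ => ?_
    have h1 := hsPu i
    simp only [hv2, hs] at *
    nlinarith [h1]
  have hE : F P ≤ F z := by
    have h1 : F u ≤ F v2 := hu v2 hv2mono
    have e1 := hF u hu_mono
    have e2 := hF v2 hv2mono
    have e3 := hF P hPmono
    have e4 := hF z hz_mono
    rw [e1, e2] at h1
    rw [e3, e4]
    have hsum : ∑ i, ((P i - x i)^2 + (v2 i - x i)^2)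
        = ∑ i, (P i - x i)^2 + ∑ i, (v2 i - x i)^2 := Finset.sum_add_distrib
    have hsum2 : ∑ i, ((z i - x i)^2 + (u i - x i)^2)
        = ∑ i, (z i - x i)^2 + ∑ i, (u i - x i)^2 := Finset.sum_add_distrib
    have hvL : v2 L = u L - (P L - z L) := rfl
    have hv0 : v2 0 = u 0 - (P 0 - z 0) := rfl
    rw [hvL, hv0] at h1
    have hEq' : ∑ i, (P i - x i)^2 + ∑ i, (v2 i - x i)^2
        = ∑ i, (z i - x i)^2 + ∑ i, (u i - x i)^2 := by
      rw [← hsum, ← hsum2]; exact hEq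
    nlinarith [hEq', h1, hγ]
  exact huniq P hPnonneg hPmono hE
end

section
/- Let n ≥ 2 and define g : ℝⁿ → ℝ by g(w) = Σ_{i=1}^{n−1} |w_{i+1} − w_i|. Let x ∈ ℝⁿ and let v ∈ ℝⁿ be a subgradient of g at x, i.e., g(y) ≥ g(x) + ⟨v, y − x⟩ for all y ∈ ℝⁿ. Then v is also a subgradient of g at x⁺, the coordinatewise positive part of x: g(y) ≥ g(x⁺) + ⟨v, y − x⁺⟩ for all y ∈ ℝⁿ. In other words, ∂g(x) ⊆ ∂g(x⁺), which verifies Yu's sufficient condition ∂g(Prox_f(x)) ⊇ ∂g(x) for f the indicator of the nonnegative orthant. -/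
/-- The fused-lasso (total-variation) seminorm
`g(w) = ∑_{i=1}^{n−1} |w_{i+1} − w_i|` on `ℝⁿ` with `n = m + 2 ≥ 2`. -/
def fusedLassoPenalty (m : ℕ) (w : Fin (m + 2) → ℝ) : ℝ :=
  ∑ i : Fin (m + 1), |w i.succ - w i.castSucc|

private lemma abs_split (a b : ℝ) :
    |a - b| = |max a 0 - max b 0| + |max (-a) 0 - max (-b) 0| := by
  rcases le_total a 0 with ha | ha <;> rcases le_total b 0 with hb | hb
  · rw [max_eq_right ha, max_eq_right hb, max_eq_left (neg_nonneg.2 ha),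
      max_eq_left (neg_nonneg.2 hb), sub_self, abs_zero, neg_sub_neg,
      abs_sub_comm a b]
    ring
  · rw [max_eq_right ha, max_eq_left hb, max_eq_left (neg_nonneg.2 ha),
      max_eq_right (neg_nonpos.2 hb), abs_of_nonpos (by linarith : a - b ≤ 0),
      abs_of_nonpos (by linarith : (0:ℝ) - b ≤ 0),
      abs_of_nonneg (by linarith : (0:ℝ) ≤ -a - 0)]
    ring
  · rw [max_eq_left ha, max_eq_right hb, max_eq_right (neg_nonpos.2 ha),
      max_eq_left (neg_nonneg.2 hb), abs_of_nonneg (by linarith : (0:ℝ) ≤ a - b),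
      abs_of_nonneg (by linarith : (0:ℝ) ≤ a - 0),
      abs_of_nonpos (by linarith : (0:ℝ) - -b ≤ 0)]
    ring
  · rw [max_eq_left ha, max_eq_left hb, max_eq_right (neg_nonpos.2 ha),
      max_eq_right (neg_nonpos.2 hb), sub_self, abs_zero]
    ring

private lemma penalty_sub (m : ℕ) (x y : Fin (m + 2) → ℝ) :
    fusedLassoPenalty m (fun i => x i + y i) ≤
      fusedLassoPenalty m x + fusedLassoPenalty m y := by
  unfold fusedLassoPenalty
  rw [← Finset.sum_add_distrib]
  apply Finset.sum_le_sum
  intro i _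
  have : x i.succ + y i.succ - (x i.castSucc + y i.castSucc)
      = (x i.succ - x i.castSucc) + (y i.succ - y i.castSucc) := by ring
  rw [this]
  exact abs_add_le _ _

/-- every subgradient of the fused-lasso seminorm `g` at `x` is
also a subgradient of `g` at the coordinatewise positive part `x⁺`, i.e.
`∂g(x) ⊆ ∂g(x⁺)`.  This verifies Yu's sufficient condition
`∂g(Prox_f(x)) ⊇ ∂g(x)` for `f` the indicator of the nonnegative orthant. -/
theorem subgradient_fusedLasso_posPart (m : ℕ) (x v : Fin (m + 2) → ℝ)
    (hv : ∀ y : Fin (m + 2) → ℝ,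
      fusedLassoPenalty m x + ∑ i, v i * (y i - x i) ≤ fusedLassoPenalty m y) :
    ∀ y : Fin (m + 2) → ℝ,
      fusedLassoPenalty m (fun i => max (x i) 0) +
          ∑ i, v i * (y i - max (x i) 0) ≤ fusedLassoPenalty m y := by
  -- the linear functional ⟨v,·⟩ is dominated by g
  have hA : ∀ y : Fin (m + 2) → ℝ, ∑ i, v i * y i ≤ fusedLassoPenalty m y := by
    intro y
    have h1 := hv (fun i => x i + y i)
    have h2 := penalty_sub m x y
    have h3 : ∑ i, v i * (x i + y i - x i) = ∑ i, v i * y i := by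
      apply Finset.sum_congr rfl; intro i _; ring_nf
    rw [h3] at h1
    linarith
  -- equality at x
  have hB : fusedLassoPenalty m x ≤ ∑ i, v i * x i := by
    have h1 := hv 0
    have h0 : fusedLassoPenalty m (0 : Fin (m + 2) → ℝ) = 0 := by
      unfold fusedLassoPenalty; simp
    have h2 : ∑ i, v i * ((0 : Fin (m + 2) → ℝ) i - x i) = -∑ i, v i * x i := by
      rw [← Finset.sum_neg_distrib]
      apply Finset.sum_congr rfl; intro i _
      simp only [Pi.zero_apply]; ring
    rw [h0, h2] at h1
    linarith
  -- g(x) = g(x⁺) + g(x⁻)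
  have hC : fusedLassoPenalty m x =
      fusedLassoPenalty m (fun i => max (x i) 0) +
      fusedLassoPenalty m (fun i => max (-x i) 0) := by
    unfold fusedLassoPenalty
    rw [← Finset.sum_add_distrib]
    apply Finset.sum_congr rfl; intro i _
    exact abs_split _ _
  -- ⟨v, -x⁻⟩ ≤ g(x⁻)
  have hD : -∑ i, v i * max (-x i) 0 ≤ fusedLassoPenalty m (fun i => max (-x i) 0) := by
    have h1 := hA (fun i => -(max (-x i) 0))
    have h2 : fusedLassoPenalty m (fun i => -(max (-x i) 0)) =
        fusedLassoPenalty m (fun i => max (-x i) 0) := by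
      unfold fusedLassoPenalty
      apply Finset.sum_congr rfl; intro i _
      rw [show -max (-x i.succ) 0 - -max (-x i.castSucc) 0
        = -(max (-x i.succ) 0 - max (-x i.castSucc) 0) by ring, abs_neg]
    have h3 : ∑ i, v i * (-(max (-x i) 0)) = -∑ i, v i * max (-x i) 0 := by
      rw [← Finset.sum_neg_distrib]
      apply Finset.sum_congr rfl; intro i _; ring
    rw [h2, h3] at h1
    exact h1
  -- g(x⁺) ≤ ⟨v, x⁺⟩
  have hE : fusedLassoPenalty m (fun i => max (x i) 0) ≤ ∑ i, v i * max (x i) 0 := by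
    have hsplit : ∑ i, v i * max (x i) 0
        = ∑ i, v i * x i + ∑ i, v i * max (-x i) 0 := by
      rw [← Finset.sum_add_distrib]
      apply Finset.sum_congr rfl; intro i _
      rcases le_total (x i) 0 with h | h
      · rw [max_eq_right h, max_eq_left (neg_nonneg.2 h)]; ring
      · rw [max_eq_left h, max_eq_right (neg_nonpos.2 h)]; ring
    linarith
  intro y
  have h1 := hA y
  have h2 : ∑ i, v i * (y i - max (x i) 0)
      = ∑ i, v i * y i - ∑ i, v i * max (x i) 0 := by
    rw [← Finset.sum_sub_distrib]
    apply Finset.sum_congr rfl; intro i _; ring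
  rw [h2]
  linarith
end

section
/- Let n ≥ 2 and define g : ℝⁿ → ℝ on the monotone cone K = {w ∈ ℝⁿ : w_{i+1} ≥ w_i for all i} by g(w) = Σ_{i=1}^{n−1} |w_{i+1} − w_i| (extended by +∞ off K, i.e., g is the fused-lasso seminorm plus the indicator of K). Suppose x ∈ K and v ∈ ℝⁿ satisfies g(y) ≥ g(x) + ⟨v, y − x⟩ for all y ∈ K. Then x⁺ ∈ K and g(y) ≥ g(x⁺) + ⟨v, y − x⁺⟩ for all y ∈ K. In other words, the subdifferential of the penalty-plus-monotone-indicator at x is contained in its subdifferential at the positive part x⁺. -/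
/-- The monotone cone `K = {w ∈ ℝⁿ : w_{i+1} ≥ w_i for all i}`. -/
def monotoneCone (m : ℕ) (w : Fin (m + 2) → ℝ) : Prop :=
  ∀ i : Fin (m + 1), w i.castSucc ≤ w i.succ

/-- for the fused-lasso seminorm restricted to the monotone cone
`K` (i.e. plus the indicator of `K`), if `x ∈ K` and `v` is a subgradient at
`x` (relative to `K`), then the positive part `x⁺` lies in `K` and `v` is also
a subgradient at `x⁺`. -/
theorem subgradient_monotone_fusedLasso_posPart (m : ℕ)
    (x v : Fin (m + 2) → ℝ) (hx : monotoneCone m x)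
    (hv : ∀ y : Fin (m + 2) → ℝ, monotoneCone m y →
      fusedLassoPenalty m x + ∑ i, v i * (y i - x i) ≤ fusedLassoPenalty m y) :
    monotoneCone m (fun i => max (x i) 0) ∧
      ∀ y : Fin (m + 2) → ℝ, monotoneCone m y →
        fusedLassoPenalty m (fun i => max (x i) 0) +
            ∑ i, v i * (y i - max (x i) 0) ≤ fusedLassoPenalty m y := by
  have hxp : monotoneCone m (fun i => max (x i) 0) := fun i => max_le_max (hx i) le_rfl
  have hxm : monotoneCone m (fun i => x i + min (x i) 0) := fun i =>
    add_le_add (hx i) (min_le_min (hx i) le_rfl)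
  have hsum : fusedLassoPenalty m (fun i => max (x i) 0)
      + fusedLassoPenalty m (fun i => x i + min (x i) 0)
      = 2 * fusedLassoPenalty m x := by
    unfold fusedLassoPenalty
    rw [← Finset.sum_add_distrib, Finset.mul_sum]
    apply Finset.sum_congr rfl
    intro i _
    have h1 := hx i
    have h2 : min (x i.castSucc) 0 ≤ min (x i.succ) 0 := min_le_min h1 le_rfl
    have h3 : max (x i.castSucc) 0 ≤ max (x i.succ) 0 := max_le_max h1 le_rfl
    have e1 : max (x i.succ) 0 + min (x i.succ) 0 = x i.succ := by
      have := max_add_min (x i.succ) 0; linarith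
    have e2 : max (x i.castSucc) 0 + min (x i.castSucc) 0 = x i.castSucc := by
      have := max_add_min (x i.castSucc) 0; linarith
    show |max (x i.succ) 0 - max (x i.castSucc) 0|
        + |x i.succ + min (x i.succ) 0 - (x i.castSucc + min (x i.castSucc) 0)|
        = 2 * |x i.succ - x i.castSucc|
    rw [abs_of_nonneg (by linarith), abs_of_nonneg (by linarith),
      abs_of_nonneg (by linarith)]
    linarith
  have key : fusedLassoPenalty m x + ∑ i, v i * (x i + min (x i) 0 - x i)
      ≤ fusedLassoPenalty m (fun i => x i + min (x i) 0) := hv _ hxm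
  refine ⟨hxp, fun y hy => ?_⟩
  have h0 := hv y hy
  have e : ∑ i, v i * (y i - max (x i) 0)
      = ∑ i, v i * (y i - x i) + ∑ i, v i * (x i + min (x i) 0 - x i) := by
    rw [← Finset.sum_add_distrib]
    apply Finset.sum_congr rfl
    intro i _
    linear_combination (-(v i)) * max_add_min (x i) 0
  rw [e]
  linarith
end

section
/- Let ε > 0 and define φ : ℝ → ℝ by φ(u) = log(ε + |u|) − |u|/ε. Then φ is continuously differentiable on all of ℝ (including at u = 0), with derivative φ′(u) = sign(u)·(1/(ε + |u|) − 1/ε), where sign(0) = 0. In particular φ′(0) = 0, even though u ↦ log(ε + |u|) and u ↦ |u|/ε are individually non-differentiable at 0. -/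
/-!
Write `φ = g ∘ |·|` with `g t = log (ε + t) - t / ε`, which is smooth on `(-ε, ∞)` with
`g' 0 = 0`. Composing with `|·|` multiplies the derivative by `sign u` away from `0`, and at `0`
the vanishing of `g' 0` gives `g |u| - g 0 = o(|u|) = o(u)`. Continuity of `sign u · g' |u|`
at `0` again comes from `g' 0 = 0`, since `sign` is bounded.
-/

open Filter Topology Asymptotics

lemma Real.sign_eq_coe_sign (u : ℝ) : Real.sign u = (SignType.sign u : ℝ) := by
  rcases lt_trichotomy u 0 with h | rfl | h
  · simp [Real.sign_of_neg h, h]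
  · simp [Real.sign_zero]
  · simp [Real.sign_of_pos h, h]

lemma Real.abs_sign_le_one (u : ℝ) : |Real.sign u| ≤ 1 := by
  rcases Real.sign_apply_eq u with h | h | h <;> simp [h]

lemma HasDerivAt.comp_abs_of_deriv_zero {g : ℝ → ℝ} (hg : HasDerivAt g 0 0) :
    HasDerivAt (fun u => g |u|) 0 0 := by
  rw [hasDerivAt_iff_isLittleO] at hg ⊢
  have habs : Tendsto (fun u : ℝ => |u|) (𝓝 0) (𝓝 0) := by
    simpa using continuous_abs.tendsto (0 : ℝ)
  have h := hg.comp_tendsto habs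
  simp only [Function.comp_def, sub_zero, smul_zero, abs_zero] at h ⊢
  exact isLittleO_abs_right.1 h

theorem HasDerivAt.comp_abs {g : ℝ → ℝ} {d u : ℝ} (hg : HasDerivAt g d |u|)
    (hd : u = 0 → d = 0) : HasDerivAt (fun v => g |v|) (Real.sign u * d) u := by
  rcases eq_or_ne u 0 with rfl | hu
  · rw [hd rfl, mul_zero]
    exact HasDerivAt.comp_abs_of_deriv_zero (by simpa [hd rfl] using hg)
  · rw [Real.sign_eq_coe_sign, mul_comm]
    exact hg.comp u (hasDerivAt_abs hu)

theorem Continuous.sign_mul {k : ℝ → ℝ} (hk : Continuous k) (hk₀ : k 0 = 0) :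
    Continuous fun u => Real.sign u * k u := by
  refine continuous_iff_continuousAt.2 fun u => ?_
  rcases eq_or_ne u 0 with rfl | hu
  · have hbdd : IsBoundedUnder (· ≤ ·) (𝓝 0) ((‖·‖) ∘ Real.sign) :=
      isBoundedUnder_of ⟨1, fun u => by simpa using Real.abs_sign_le_one u⟩
    have hk_lim : Tendsto k (𝓝 0) (𝓝 0) := by simpa [hk₀] using hk.tendsto 0
    simpa [ContinuousAt, hk₀] using isBoundedUnder_le_mul_tendsto_zero hbdd hk_lim
  · have hsign : ContinuousAt Real.sign u := by
      simp only [funext Real.sign_eq_coe_sign]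
      exact (continuous_of_discreteTopology (f := ((↑) : SignType → ℝ))).continuousAt.comp
        (continuousAt_sign_of_ne_zero hu)
    exact hsign.mul hk.continuousAt

lemma hasDerivAt_log_add_sub_div {ε t : ℝ} (ht : ε + t ≠ 0) :
    HasDerivAt (fun t => Real.log (ε + t) - t / ε) (1 / (ε + t) - 1 / ε) t := by
  have hlog : HasDerivAt (fun t => Real.log (ε + t)) (1 / (ε + t)) t := by
    simpa using ((hasDerivAt_id t).const_add ε).log ht
  exact hlog.sub ((hasDerivAt_id' t).div_const ε)

/-- for `ε > 0`, the function `φ(u) = log(ε + |u|) − |u|/ε` is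
continuously differentiable on all of `ℝ` (including at `u = 0`), with
derivative `φ′(u) = sign(u)·(1/(ε + |u|) − 1/ε)` (where `sign 0 = 0`, so that
in particular `φ′(0) = 0`). -/
theorem scalar_log_penalty_smooth (ε : ℝ) (hε : 0 < ε) :
    (∀ u : ℝ,
        HasDerivAt (fun u : ℝ => Real.log (ε + |u|) - |u| / ε)
          (Real.sign u * (1 / (ε + |u|) - 1 / ε)) u) ∧
      Continuous (fun u : ℝ => Real.sign u * (1 / (ε + |u|) - 1 / ε)) := by
  have hpos : ∀ u : ℝ, ε + |u| ≠ 0 := fun u => by positivity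
  refine ⟨fun u => (hasDerivAt_log_add_sub_div (hpos u)).comp_abs fun hu => by simp [hu], ?_⟩
  refine Continuous.sign_mul ?_ (by simp)
  exact (continuous_const.div (by fun_prop) hpos).sub continuous_const
end
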